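/- The Thue-Morse quasicrystal contains the lattice (a+b)·ℤ, i.e. for every integer m, m(a+b) ∈ Λ_{a,b} = (−Λ⁺) ∪ Λ⁺ where Λ⁺ = {0} ∪ {f(n) : n ≥ 1}. -/
import Mathlib


/-- Binary digit sum. -/
def binDigitSum (n : ℕ) : ℕ := (Nat.digits 2 n).sum

/-- The ±1 Thue–Morse sequence, as a real number. -/
noncomputable def tm (n : ℕ) : ℝ := (-1) ^ (binDigitSum n)

/-- The Thue–Morse point-set function `f`. -/
noncomputable def tmPoint (a b : ℝ) (n : ℕ) : ℝ :=
  ∑ m ∈ Finset.range n, ((a + b) / 2 + (a - b) / 2 * tm m)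

/-- The positive part of the Thue–Morse quasicrystal. -/
def tmLambdaPlus (a b : ℝ) : Set ℝ :=
  {0} ∪ {x : ℝ | ∃ n : ℕ, 1 ≤ n ∧ x = tmPoint a b n}

/-- The Thue–Morse quasicrystal. -/
def tmLambda (a b : ℝ) : Set ℝ :=
  ((fun x : ℝ => -x) '' tmLambdaPlus a b) ∪ tmLambdaPlus a b

lemma binDigitSum_two_mul (n : ℕ) : binDigitSum (2 * n) = binDigitSum n := by
  rcases Nat.eq_zero_or_pos n with h | h
  · simp [h, binDigitSum]
  · unfold binDigitSum
    rw [Nat.digits_def' (by norm_num) (by omega)]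
    simp [Nat.mul_div_cancel_left _ (by norm_num : 0 < 2)]

lemma binDigitSum_two_mul_add_one (n : ℕ) :
    binDigitSum (2 * n + 1) = binDigitSum n + 1 := by
  unfold binDigitSum
  rw [Nat.digits_def' (by norm_num) (by omega)]
  have h1 : (2 * n + 1) % 2 = 1 := by omega
  have h2 : (2 * n + 1) / 2 = n := by omega
  rw [List.sum_cons, h1, h2, Nat.add_comm]

lemma tm_odd (n : ℕ) : tm (2 * n + 1) = -tm (2 * n) := by
  unfold tm
  rw [binDigitSum_two_mul, binDigitSum_two_mul_add_one, pow_succ]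
  ring

lemma tmPoint_even (a b : ℝ) (n : ℕ) :
    tmPoint a b (2 * n) = n * (a + b) := by
  induction n with
  | zero => simp [tmPoint]
  | succ k ih =>
    have : 2 * (k + 1) = (2 * k + 1) + 1 := by ring
    rw [this]
    unfold tmPoint at ih ⊢
    rw [Finset.sum_range_succ, Finset.sum_range_succ, ih, tm_odd]
    push_cast
    ring

theorem stmt_6 (a b : ℝ) (hb : 0 < b) (hba : b < a) :
    ∀ m : ℤ, (m : ℝ) * (a + b) ∈ tmLambda a b := by
  have key : ∀ k : ℕ, (k : ℝ) * (a + b) ∈ tmLambdaPlus a b := by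
    intro k
    rcases Nat.eq_zero_or_pos k with h | h
    · left; simp [h]
    · right
      exact ⟨2 * k, by omega, by rw [tmPoint_even]⟩
  intro m
  rcases le_or_gt 0 m with h | h
  · right
    obtain ⟨k, rfl⟩ := Int.eq_ofNat_of_zero_le h
    exact_mod_cast key k
  · left
    obtain ⟨k, rfl⟩ : ∃ k : ℕ, m = -(k : ℤ) := ⟨m.natAbs, by omega⟩
    exact ⟨(k : ℝ) * (a + b), key k, by push_cast; ring⟩
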